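/- Let T̂ = Θ̂ + Θ̂ᵀ − Θ̂ᵀΣ̂Θ̂ with Σ̂ symmetric and Θ₀ symmetric with Θ₀Σ₀ = I. If max_j ‖Σ̂(Θ₀)ⱼ − eⱼ‖_∞ ≤ a, max_j ‖Σ̂Θ̂ⱼ − eⱼ‖_∞ ≤ b, and max_j ‖Θ̂ⱼ − (Θ₀)ⱼ‖₁ ≤ c, then ‖T̂ − Θ₀ + Θ₀(Σ̂ − Σ₀)Θ₀‖_∞ ≤ (a + b)·c, where ‖·‖_∞ denotes the entrywise supremum norm. -/
import Mathlib


open Matrix BigOperators Finset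

/-- Sup-norm bound on the remainder of the de-sparsified estimator. With
`T̂ = Θ̂ + Θ̂ᵀ − Θ̂ᵀΣ̂Θ̂`, `Σ̂` symmetric, `Θ₀` symmetric with `Θ₀Σ₀ = I`, if
columnwise `‖Σ̂(Θ₀)ⱼ − eⱼ‖_∞ ≤ a`, `‖Σ̂Θ̂ⱼ − eⱼ‖_∞ ≤ b`, and
`‖Θ̂ⱼ − (Θ₀)ⱼ‖₁ ≤ c`, then entrywise
`‖T̂ − Θ₀ + Θ₀(Σ̂ − Σ₀)Θ₀‖_∞ ≤ (a + b)·c`. -/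
theorem stmt_6 {p : ℕ} (Shat S0 T0 Th : Matrix (Fin p) (Fin p) ℝ)
    (hShat : Shatᵀ = Shat) (hT0sym : T0ᵀ = T0)
    (hinv : T0 * S0 = 1) (hinv' : S0 * T0 = 1)
    (That : Matrix (Fin p) (Fin p) ℝ) (hThat : That = Th + Thᵀ - Thᵀ * Shat * Th)
    (a b c : ℝ) (ha : 0 ≤ a) (hb : 0 ≤ b) (hc : 0 ≤ c)
    (hA : ∀ j i, |(Shat * T0 - 1) i j| ≤ a)
    (hB : ∀ j i, |(Shat * Th - 1) i j| ≤ b)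
    (hC : ∀ j, ∑ i, |Th i j - T0 i j| ≤ c) :
    ∀ i j, |(That - T0 + T0 * (Shat - S0) * T0) i j| ≤ (a + b) * c := by
  have h1 : T0 * S0 * T0 = T0 := by rw [hinv, one_mul]
  have key : That - T0 + T0 * (Shat - S0) * T0
      = -((Thᵀ - T0) * (Shat * Th - 1)) - ((T0 * Shat - 1) * (Th - T0)) := by
    subst hThat
    have h2 : T0 * (Shat - S0) * T0 = T0 * Shat * T0 - T0 := by
      rw [Matrix.mul_sub, Matrix.sub_mul, h1]
    rw [h2]
    noncomm_ring
  intro i j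
  rw [key]
  have hb1 : |((Thᵀ - T0) * (Shat * Th - 1)) i j| ≤ b * c := by
    rw [Matrix.mul_apply]
    calc |∑ k, (Thᵀ - T0) i k * (Shat * Th - 1) k j|
        ≤ ∑ k, |(Thᵀ - T0) i k * (Shat * Th - 1) k j| := Finset.abs_sum_le_sum_abs _ _
      _ ≤ ∑ k, |(Thᵀ - T0) i k| * b := by
          apply Finset.sum_le_sum; intro k _
          rw [abs_mul]
          exact mul_le_mul_of_nonneg_left (hB j k) (abs_nonneg _)
      _ = (∑ k, |Th k i - T0 k i|) * b := by
          rw [← Finset.sum_mul]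
          congr 1
          apply Finset.sum_congr rfl
          intro k _
          have : T0 i k = T0 k i := congrFun (congrFun hT0sym k) i
          simp [Matrix.sub_apply, Matrix.transpose_apply, this]
      _ ≤ c * b := mul_le_mul_of_nonneg_right (hC i) hb
      _ = b * c := mul_comm _ _
  have ha1 : |((T0 * Shat - 1) * (Th - T0)) i j| ≤ a * c := by
    rw [Matrix.mul_apply]
    calc |∑ k, (T0 * Shat - 1) i k * (Th - T0) k j|
        ≤ ∑ k, |(T0 * Shat - 1) i k| * |(Th - T0) k j| := by
          refine (Finset.abs_sum_le_sum_abs _ _).trans ?_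
          simp [abs_mul]
      _ ≤ ∑ k, a * |(Th - T0) k j| := by
          apply Finset.sum_le_sum; intro k _
          refine mul_le_mul_of_nonneg_right ?_ (abs_nonneg _)
          have hsym : (Shat * T0 - 1)ᵀ = T0 * Shat - 1 := by
            rw [Matrix.transpose_sub, Matrix.transpose_mul, hShat, hT0sym,
              Matrix.transpose_one]
          have heq : (T0 * Shat - 1) i k = (Shat * T0 - 1) k i := by
            have := congrArg (fun M => M i k) hsym
            simpa [Matrix.transpose_apply] using this.symm
          rw [heq]
          exact hA i k
      _ = a * ∑ k, |Th k j - T0 k j| := by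
          rw [← Finset.mul_sum]
          simp [Matrix.sub_apply]
      _ ≤ a * c := mul_le_mul_of_nonneg_left (hC j) ha
  have : |(-((Thᵀ - T0) * (Shat * Th - 1)) - ((T0 * Shat - 1) * (Th - T0))) i j|
      ≤ |((Thᵀ - T0) * (Shat * Th - 1)) i j| + |((T0 * Shat - 1) * (Th - T0)) i j| := by
    simp only [Matrix.sub_apply, Matrix.neg_apply]
    calc |-((Thᵀ - T0) * (Shat * Th - 1)) i j - ((T0 * Shat - 1) * (Th - T0)) i j|
        ≤ |-((Thᵀ - T0) * (Shat * Th - 1)) i j| + |((T0 * Shat - 1) * (Th - T0)) i j| :=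
          abs_sub _ _
      _ = _ := by rw [abs_neg]
  linarith
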